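/- arXiv:2204.07287 — 2 statements merged into one kernel-verified Lean document; each statement's English description precedes it below -/
import Mathlib

section
/- If -6 < ξ < 6, then every complex root of 3z⁴ + ξz² + 3 = 0 has modulus 1. -/
/-!
Put `w = z ^ 2`, a root of the real quadratic `3 w ^ 2 + ξ w + 3`. Its discriminant `ξ ^ 2 - 36`
is negative, so `w` is not real and `conj w` is the other root. By Vieta the product of the roots
is `3 / 3`, i.e. `‖w‖ ^ 2 = 1`, hence `‖z‖ = 1`.
-/

open ComplexConjugate

namespace Complex

variable {a b c : ℝ} {w : ℂ}

theorem im_ne_zero_of_quadratic_eq_zero (hdisc : discrim a b c < 0)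
    (hw : a * w ^ 2 + b * w + c = 0) : w.im ≠ 0 := by
  intro him
  have hreal : a * (w.re * w.re) + b * w.re + c = 0 := by
    have hw_re : w = w.re := ext rfl him
    rw [hw_re] at hw
    exact_mod_cast (by linear_combination hw : (a : ℂ) * (w.re * w.re) + b * w.re + c = 0)
  rw [discrim_eq_sq_of_quadratic_eq_zero hreal] at hdisc
  exact (sq_nonneg _).not_gt hdisc

theorem mul_norm_sq_eq_of_quadratic_eq_zero (hdisc : discrim a b c < 0)
    (hw : a * w ^ 2 + b * w + c = 0) : a * ‖w‖ ^ 2 = c := by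
  have hconj : a * conj w ^ 2 + b * conj w + c = 0 := by
    simpa using congrArg conj hw
  have hsub : w - conj w ≠ 0 := by
    rw [sub_ne_zero, ne_comm, Ne, conj_eq_iff_im]
    exact im_ne_zero_of_quadratic_eq_zero hdisc hw
  have hsum : a * (w + conj w) = -b := by
    have : (w - conj w) * (a * (w + conj w) + b) = 0 := by linear_combination hw - hconj
    linear_combination (mul_eq_zero.mp this).resolve_left hsub
  have hprod : (a : ℂ) * (w * conj w) = c := by linear_combination w * hsum - hw
  rw [mul_conj'] at hprod
  exact_mod_cast hprod

end Complex

/-- If -6 < ξ < 6, every complex root of 3z⁴ + ξz² + 3 = 0 has modulus 1. -/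
theorem stmt_5 (ξ : ℝ) (hξ₁ : -6 < ξ) (hξ₂ : ξ < 6) (z : ℂ)
    (hz : 3*z^4 + (ξ : ℂ)*z^2 + 3 = 0) : ‖z‖ = 1 := by
  have hdisc : discrim 3 ξ 3 < 0 := by
    rw [discrim]; nlinarith
  have hw : ((3 : ℝ) : ℂ) * (z ^ 2) ^ 2 + ξ * z ^ 2 + ((3 : ℝ) : ℂ) = 0 := by
    push_cast; linear_combination hz
  have hnorm := Complex.mul_norm_sq_eq_of_quadratic_eq_zero hdisc hw
  rw [norm_pow, ← pow_mul] at hnorm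
  exact (pow_eq_one_iff_of_nonneg (norm_nonneg z) (by norm_num : 2 * 2 ≠ 0)).mp (by linarith)
end

section
/- There exists a constant C > 0 such that for all t > 0 and all η ≥ 0, ∫₀^∞ e^{-t v²}/√|v - η| dv ≤ C·t^{-1/4}. -/
/-!
Split the kernel at scale `δ = t^{-1/2}` around its singularity. On `|v - η| < δ` bound the
Gaussian by `1`; the kernel `|v - η|^{-1/2}` integrates to `4 √δ` there. Off that window bound the
kernel by `δ^{-1/2}`, leaving `δ^{-1/2}` times the Gaussian integral `√(π/t)/2`. Both terms are
multiples of `t^{-1/4}`.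
-/

open MeasureTheory Set Real

lemma intervalIntegrable_inv_sqrt_abs (a b : ℝ) :
    IntervalIntegrable (fun x : ℝ => (√|x|)⁻¹) volume a b := by
  have from_zero_of_nonneg :
      ∀ c, 0 ≤ c → IntervalIntegrable (fun x : ℝ => (√|x|)⁻¹) volume 0 c := by
    intro c hc
    refine (intervalIntegral.intervalIntegrable_rpow' (r := -(1 / 2)) (by norm_num)).congr ?_
    intro x hx
    rw [uIoc_of_le hc] at hx
    simp only [abs_of_pos hx.1, sqrt_eq_rpow, rpow_neg hx.1.le]
  have from_zero : ∀ c, IntervalIntegrable (fun x : ℝ => (√|x|)⁻¹) volume 0 c := by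
    intro c
    rcases le_total 0 c with hc | hc
    · exact from_zero_of_nonneg c hc
    · simpa using (IntervalIntegrable.iff_comp_neg (by simp)).mp
        (from_zero_of_nonneg (-c) (neg_nonneg.mpr hc))
  exact (from_zero a).symm.trans (from_zero b)

lemma integral_inv_sqrt_abs_zero_left {c : ℝ} (hc : 0 ≤ c) :
    ∫ x in (0 : ℝ)..c, (√|x|)⁻¹ = 2 * √c := by
  have on_interval : EqOn (fun x : ℝ => (√|x|)⁻¹) (fun x => x ^ (-(1 / 2) : ℝ)) (uIcc 0 c) := by
    intro x hx
    rw [uIcc_of_le hc] at hx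
    simp only [abs_of_nonneg hx.1, sqrt_eq_rpow, rpow_neg hx.1]
  rw [intervalIntegral.integral_congr on_interval, integral_rpow (Or.inl (by norm_num)),
    zero_rpow (by norm_num), sqrt_eq_rpow]
  norm_num
  ring

lemma integral_inv_sqrt_abs_neg_self {c : ℝ} (hc : 0 ≤ c) :
    ∫ x in -c..c, (√|x|)⁻¹ = 4 * √c := by
  have left_half : ∫ x in -c..0, (√|x|)⁻¹ = 2 * √c := by
    have reflected := intervalIntegral.integral_comp_neg (a := 0) (b := c) (fun x : ℝ => (√|x|)⁻¹)
    simp only [abs_neg, neg_zero] at reflected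
    rw [← reflected, integral_inv_sqrt_abs_zero_left hc]
  rw [← intervalIntegral.integral_add_adjacent_intervals (intervalIntegrable_inv_sqrt_abs _ _)
    (intervalIntegrable_inv_sqrt_abs _ _), left_half, integral_inv_sqrt_abs_zero_left hc]
  ring

lemma integrableOn_inv_sqrt_abs_sub (η a b : ℝ) :
    IntegrableOn (fun v : ℝ => (√|v - η|)⁻¹) (Ioo a b) := by
  rcases le_total a b with hab | hab
  · rw [← intervalIntegrable_iff_integrableOn_Ioo_of_le hab]
    simpa using (intervalIntegrable_inv_sqrt_abs (a - η) (b - η)).comp_sub_right η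
  · simp [Ioo_eq_empty_of_le hab]

lemma integral_Ioo_inv_sqrt_abs_sub (η : ℝ) {δ : ℝ} (hδ : 0 ≤ δ) :
    ∫ v in Ioo (η - δ) (η + δ), (√|v - η|)⁻¹ = 4 * √δ := by
  rw [← integral_Ioc_eq_integral_Ioo, ← intervalIntegral.integral_of_le (by linarith),
    intervalIntegral.integral_comp_sub_right (fun x : ℝ => (√|x|)⁻¹)]
  simpa using integral_inv_sqrt_abs_neg_self hδ

lemma div_sqrt_abs_sub_le_indicator_add (η : ℝ) {δ a : ℝ} (hδ : 0 < δ) (ha₀ : 0 ≤ a)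
    (ha₁ : a ≤ 1) (v : ℝ) :
    a / √|v - η| ≤ (Ioo (η - δ) (η + δ)).indicator (fun v => (√|v - η|)⁻¹) v + a / √δ := by
  rcases lt_or_ge |v - η| δ with hnear | hfar
  · have hv : v ∈ Ioo (η - δ) (η + δ) := by
      obtain ⟨h₁, h₂⟩ := abs_lt.mp hnear
      constructor <;> linarith
    rw [indicator_of_mem hv, ← one_div]
    exact le_add_of_le_of_nonneg (div_le_div_of_nonneg_right ha₁ (sqrt_nonneg _))
      (div_nonneg ha₀ (sqrt_nonneg δ))
  · exact le_add_of_nonneg_of_le (indicator_nonneg (fun _ _ => inv_nonneg.2 (sqrt_nonneg _)) v)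
      (div_le_div_of_nonneg_left ha₀ (sqrt_pos.2 hδ) (sqrt_le_sqrt hfar))

lemma setIntegral_div_sqrt_abs_sub_le {f : ℝ → ℝ} (hf : Integrable f) (hf₀ : ∀ v, 0 ≤ f v)
    (hf₁ : ∀ v, f v ≤ 1) (s : Set ℝ) (η : ℝ) {δ : ℝ} (hδ : 0 < δ) :
    ∫ v in s, f v / √|v - η| ≤ 4 * √δ + (∫ v in s, f v) / √δ := by
  set window := (Ioo (η - δ) (η + δ)).indicator (fun v => (√|v - η|)⁻¹)
  have window_integrable : Integrable window :=
    (integrable_indicator_iff measurableSet_Ioo).2 (integrableOn_inv_sqrt_abs_sub η _ _)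
  have window_nonneg : ∀ v, 0 ≤ window v :=
    indicator_nonneg fun v _ => inv_nonneg.2 (sqrt_nonneg _)
  calc ∫ v in s, f v / √|v - η|
      ≤ ∫ v in s, (window v + f v / √δ) :=
        integral_mono_of_nonneg (ae_of_all _ fun v => div_nonneg (hf₀ v) (sqrt_nonneg _))
          (window_integrable.add (hf.div_const _)).integrableOn
          (ae_of_all _ fun v => div_sqrt_abs_sub_le_indicator_add η hδ (hf₀ v) (hf₁ v) v)
    _ = (∫ v in s, window v) + (∫ v in s, f v) / √δ := by
        rw [integral_add window_integrable.integrableOn (hf.div_const _).integrableOn,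
          integral_div]
    _ ≤ (∫ v, window v) + (∫ v in s, f v) / √δ := by
        gcongr ?_ + _
        exact setIntegral_le_integral window_integrable (ae_of_all _ window_nonneg)
    _ = 4 * √δ + (∫ v in s, f v) / √δ := by
        rw [integral_indicator measurableSet_Ioo, integral_Ioo_inv_sqrt_abs_sub η hδ.le]

/-- There is a constant C > 0 such that for all t > 0 and η ≥ 0,
∫₀^∞ e^{-t v²}/√|v - η| dv ≤ C·t^{-1/4}. -/
theorem stmt_11 :
    ∃ C > 0, ∀ t : ℝ, 0 < t → ∀ η : ℝ, 0 ≤ η →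
      ∫ v in Set.Ioi (0:ℝ), Real.exp (-t * v^2) / Real.sqrt |v - η| ≤
        C * t ^ (-(1:ℝ)/4) := by
  refine ⟨4 + √π / 2, by positivity, fun t ht η _ => ?_⟩
  set s := t ^ (-(1:ℝ)/4)
  have hs : 0 < s := rpow_pos_of_pos ht _
  have gaussian_half_line : ∫ v in Ioi 0, exp (-t * v ^ 2) = √π / 2 * s ^ 2 := by
    rw [integral_gaussian_Ioi, sqrt_div' _ ht.le, sqrt_eq_rpow t, ← rpow_natCast,
      ← rpow_mul ht.le, show (-(1:ℝ)/4) * (2 : ℕ) = -(1/2) by norm_num, rpow_neg ht.le]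
    ring
  calc ∫ v in Ioi 0, exp (-t * v ^ 2) / √|v - η|
      ≤ 4 * √(s ^ 2) + (∫ v in Ioi 0, exp (-t * v ^ 2)) / √(s ^ 2) :=
        setIntegral_div_sqrt_abs_sub_le (integrable_exp_neg_mul_sq ht) (fun _ => (exp_pos _).le)
          (fun v => exp_le_one_iff.2 (by nlinarith [sq_nonneg v])) _ η (by positivity)
    _ = (4 + √π / 2) * s := by
        rw [sqrt_sq hs.le, gaussian_half_line]
        field_simp
end
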